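/- Let ψ = C₁ ∧ ... ∧ Cₙ be a propositional CNF formula over variables x₁,...,xₘ. Define the Kripke model M = (W,R,π) with W = {c₁,...,cₙ, s₁,...,sₘ, s̄₁,...,s̄ₘ}, edges (cᵢ,sⱼ) ∈ R iff xⱼ occurs positively in Cᵢ, (cᵢ,s̄ⱼ) ∈ R iff xⱼ occurs negatively in Cᵢ, and labeling π with pⱼ, q ∈ π(sⱼ) and pⱼ ∈ π(s̄ⱼ) (and nothing else). Then ψ is satisfiable if and only if M, {c₁,...,cₙ} ⊨ ◇ dep(p₁,...,pₘ,q). -/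

import Mathlib

/-- A Kripke model over a set of worlds `W`: accessibility relation `R` and
valuation `val` assigning to each propositional variable the set of worlds where it holds. -/
structure KripkeModel (W : Type) where
  R : W → W → Prop
  val : ℕ → Set W

/-- `img R T = R[T]`, the set of all successors of the team `T`. -/
def img {W : Type} (R : W → W → Prop) (T : Set W) : Set W := {s | ∃ s' ∈ T, R s' s}

/-- `succTeams R T = ⟨T⟩`, the set of successor teams of `T`. -/
def succTeams {W : Type} (R : W → W → Prop) (T : Set W) : Set (Set W) :=
  {T' | T' ⊆ img R T ∧ ∀ s ∈ T, ∃ s' ∈ T', R s s'}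

/-- Formulas of modal dependence logic with classical Boolean connectives,
including an arbitrary `n`-ary classical connective `conn`. -/
inductive MDLForm : Type where
  | var : ℕ → MDLForm
  | nvar : ℕ → MDLForm
  | dep : List ℕ → ℕ → MDLForm
  | neg : MDLForm → MDLForm
  | and : MDLForm → MDLForm → MDLForm
  | or : MDLForm → MDLForm → MDLForm
  | xor : MDLForm → MDLForm → MDLForm
  | conn : (n : ℕ) → ((Fin n → Bool) → Bool) → (Fin n → MDLForm) → MDLForm
  | box : MDLForm → MDLForm
  | dia : MDLForm → MDLForm

open Classical in
/-- Team semantics of modal dependence logic. -/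
noncomputable def sat {W : Type} (M : KripkeModel W) : Set W → MDLForm → Prop
  | T, .var p => ∀ w ∈ T, w ∈ M.val p
  | T, .nvar p => ∀ w ∈ T, w ∉ M.val p
  | T, .dep ps q => ∀ w ∈ T, ∀ w' ∈ T,
      (∀ p ∈ ps, (w ∈ M.val p ↔ w' ∈ M.val p)) → (w ∈ M.val q ↔ w' ∈ M.val q)
  | T, .neg φ => ¬ sat M T φ
  | T, .and φ ψ => sat M T φ ∧ sat M T ψ
  | T, .or φ ψ => sat M T φ ∨ sat M T ψ
  | T, .xor φ ψ => Xor' (sat M T φ) (sat M T ψ)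
  | T, .conn _ f φs => f (fun i => decide (sat M T (φs i))) = true
  | T, .box φ => sat M (img M.R T) φ
  | T, .dia φ => ∃ T' ∈ succTeams M.R T, sat M T' φ

/-- A formula is downwards closed if satisfaction is preserved under subteams. -/
def DownClosed (φ : MDLForm) : Prop :=
  ∀ (W : Type) (M : KripkeModel W) (T T' : Set W), T' ⊆ T → sat M T φ → sat M T' φ

/-!
A successor team of the clause worlds picks, for every clause, at least one of its literal
worlds. Two literal worlds agree on all of `p₁, …, pₘ` exactly when they carry the same
variable, and `q` records the sign, so `dep(p₁, …, pₘ, q)` holds on a set of literal worlds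
iff no variable is picked with both signs. A sign-consistent set of literals meeting every
clause is the same thing as a satisfying assignment.
-/

open Set

theorem exists_assignment_iff_exists_injOn_fst {ι V : Type*} (C : ι → List (V × Bool)) :
    (∃ α : V → Bool, ∀ i, ∃ l ∈ C i, α l.1 = l.2) ↔
      ∃ L : Set (V × Bool), InjOn Prod.fst L ∧ ∀ i, ∃ l ∈ L, l ∈ C i := by
  constructor
  · rintro ⟨α, hα⟩
    refine ⟨{l | α l.1 = l.2}, fun l hl l' hl' h => Prod.ext h (hl.symm.trans (h ▸ hl')),
      fun i => ?_⟩
    obtain ⟨l, hl, hαl⟩ := hα i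
    exact ⟨l, hαl, hl⟩
  · rintro ⟨L, hL, hC⟩
    classical
    refine ⟨fun v => decide ((v, true) ∈ L), fun i => ?_⟩
    obtain ⟨⟨v, b⟩, hlL, hl⟩ := hC i
    refine ⟨(v, b), hl, ?_⟩
    cases b with
    | true => simpa using hlL
    | false =>
      have hpos : (v, true) ∉ L := fun h => Bool.noConfusion (congrArg Prod.snd (hL h hlL rfl))
      simpa using hpos

variable {n m : ℕ}

def cnfModel (ψ : Fin n → List (Fin m × Bool)) : KripkeModel (Fin n ⊕ (Fin m × Bool)) where
  R := Sum.elim (fun i => Sum.elim (fun _ => False) (· ∈ ψ i)) fun _ _ => False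
  val k := {w | Sum.elim (fun _ => False) (fun l => k = (l.1 : ℕ) + 1 ∨ (k = 0 ∧ l.2 = true)) w}

namespace cnfModel

variable (ψ : Fin n → List (Fin m × Bool))

theorem img_subset_range_inr (T : Set (Fin n ⊕ (Fin m × Bool))) :
    img (cnfModel ψ).R T ⊆ range Sum.inr := by
  rintro (i | l) ⟨u, -, hu⟩
  · cases u <;> exact hu.elim
  · exact mem_range_self l

theorem inr_mem_val_zero {l : Fin m × Bool} : Sum.inr l ∈ (cnfModel ψ).val 0 ↔ l.2 = true := by
  simp [cnfModel]

theorem inr_mem_val_succ {l : Fin m × Bool} {k : ℕ} :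
    Sum.inr l ∈ (cnfModel ψ).val (k + 1) ↔ k = l.1 := by
  simp [cnfModel]

theorem inr_val_agree_on_vars_iff {l l' : Fin m × Bool} :
    (∀ p ∈ (List.range m).map (· + 1),
      (Sum.inr l ∈ (cnfModel ψ).val p ↔ Sum.inr l' ∈ (cnfModel ψ).val p)) ↔ l.1 = l'.1 := by
  simp only [List.forall_mem_map, List.mem_range, inr_mem_val_succ]
  exact ⟨fun h => Fin.ext ((h l.1 l.1.isLt).1 rfl), fun h k _ => by rw [h]⟩

theorem sat_dep_image_inr_iff (L : Set (Fin m × Bool)) :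
    sat (cnfModel ψ) (Sum.inr '' L) (.dep ((List.range m).map (· + 1)) 0) ↔
      InjOn Prod.fst L := by
  simp only [sat, forall_mem_image, inr_val_agree_on_vars_iff, inr_mem_val_zero,
    ← Bool.eq_iff_iff]
  exact ⟨fun h l hl l' hl' h1 => Prod.ext h1 (h hl hl' h1),
    fun h l hl l' hl' h1 => congrArg Prod.snd (h hl hl' h1)⟩

theorem image_inr_mem_succTeams_iff (L : Set (Fin m × Bool)) :
    Sum.inr '' L ∈ succTeams (cnfModel ψ).R (range Sum.inl) ↔
      (∀ l ∈ L, ∃ i, l ∈ ψ i) ∧ ∀ i, ∃ l ∈ L, l ∈ ψ i := by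
  simp only [succTeams, img, mem_ofPred_eq, subset_def, forall_mem_image, exists_mem_image,
    forall_mem_range, exists_range_iff]
  rfl

theorem sat_dia_dep_iff :
    sat (cnfModel ψ) (range Sum.inl) (.dia (.dep ((List.range m).map (· + 1)) 0)) ↔
      ∃ L : Set (Fin m × Bool), InjOn Prod.fst L ∧ ∀ i, ∃ l ∈ L, l ∈ ψ i := by
  constructor
  · rintro ⟨T', hT', hdep⟩
    obtain ⟨L, rfl⟩ := subset_range_iff_exists_image_eq.1 (hT'.1.trans (img_subset_range_inr ψ _))
    exact ⟨L, (sat_dep_image_inr_iff ψ L).1 hdep, ((image_inr_mem_succTeams_iff ψ L).1 hT').2⟩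
  · rintro ⟨L, hinj, hL⟩
    -- only literals occurring in `ψ` are reachable from the clause worlds
    let L' := L ∩ {l | ∃ i, l ∈ ψ i}
    refine ⟨Sum.inr '' L', (image_inr_mem_succTeams_iff ψ L').2 ⟨fun l hl => hl.2, fun i => ?_⟩,
      (sat_dep_image_inr_iff ψ L').2 (hinj.mono inter_subset_left)⟩
    obtain ⟨l, hlL, hl⟩ := hL i
    exact ⟨l, ⟨hlL, i, hl⟩, hl⟩

end cnfModel

theorem cnf_sat_iff_dia_dep (n m : ℕ) (ψ : Fin n → List (Fin m × Bool)) :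
    (∃ α : Fin m → Bool, ∀ i, ∃ l ∈ ψ i, α l.1 = l.2) ↔
      sat
        { R := fun u v =>
            match u, v with
            | Sum.inl i, Sum.inr l => l ∈ ψ i
            | _, _ => False,
          val := fun k => {w | match w with
            | Sum.inl _ => False
            | Sum.inr (j, b) => k = (j : ℕ) + 1 ∨ (k = 0 ∧ b = true)}
          : KripkeModel (Fin n ⊕ (Fin m × Bool)) }
        (Set.range Sum.inl)
        (.dia (.dep ((List.range m).map (· + 1)) 0)) := by
  -- the model in the statement is `cnfModel ψ`, once its pattern matches are split
  convert (exists_assignment_iff_exists_injOn_fst ψ).trans (cnfModel.sat_dia_dep_iff ψ).symm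
    using 3
  · funext u v
    cases u <;> cases v <;> rfl
  · funext k
    ext (_ | ⟨_, _⟩) <;> rfl
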